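/- arXiv:2404.10728 — 7 statements merged into one kernel-verified Lean document; each statement's English description precedes it below -/
import Mathlib

section
/- Let K be a positive integer, let γ > 0, α > 0 and R ≥ 0 be real numbers, let n be a natural number, and let 0 = σ₀ < σ₁ < ⋯ < σₙ ≤ K be natural numbers. Suppose D₁, …, Dₙ are real numbers satisfying Dᵢ ≥ γ/(σᵢ − σᵢ₋₁) for every i ∈ {1,…,n} and ∑_{i=1}^n Dᵢ ≤ R. Then n ≤ K/α + Rα/γ. -/
/-- Counting argument for the communication-complexity bound: if the
synchronization episodes `0 = σ 0 < σ 1 < ⋯ < σ n ≤ K` have log-determinant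
increments `D i ≥ γ / (σ i - σ (i-1))` with total `∑ D i ≤ R`, then
`n ≤ K / α + R * α / γ`. -/
theorem stmt0 (K : ℕ) (hK : 0 < K) (γ α R : ℝ) (hγ : 0 < γ) (hα : 0 < α) (hR : 0 ≤ R)
    (n : ℕ) (σ : ℕ → ℕ) (hσ0 : σ 0 = 0) (hmono : ∀ i < n, σ i < σ (i + 1)) (hσn : σ n ≤ K)
    (D : ℕ → ℝ)
    (hD : ∀ i ∈ Finset.Icc 1 n, γ / ((σ i : ℝ) - (σ (i - 1) : ℝ)) ≤ D i)
    (hsum : ∑ i ∈ Finset.Icc 1 n, D i ≤ R) :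
    (n : ℝ) ≤ K / α + R * α / γ := by
  set g : ℕ → ℝ := fun i => (σ i : ℝ) - (σ (i - 1) : ℝ) with hg
  set S := Finset.Icc 1 n with hS
  have hgpos : ∀ i ∈ S, 0 < g i := by
    intro i hi
    rw [hS, Finset.mem_Icc] at hi
    have h1 : i - 1 < n := by omega
    have := hmono (i - 1) h1
    have h2 : i - 1 + 1 = i := by omega
    rw [h2] at this
    simp only [hg, sub_pos]
    exact_mod_cast this
  -- telescoping: sum of gaps = σ n
  have hsum_g : ∀ m, ∑ i ∈ Finset.Icc 1 m, g i = (σ m : ℝ) - (σ 0 : ℝ) := by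
    intro m
    induction m with
    | zero => simp
    | succ k ih =>
      rw [Finset.sum_Icc_succ_top (by omega : 1 ≤ k + 1), ih]
      simp only [hg, Nat.add_sub_cancel]
      ring
  set A := S.filter (fun i => α ≤ g i) with hA
  set B := S.filter (fun i => ¬ α ≤ g i) with hB
  have hcard : A.card + B.card = n := by
    rw [hA, hB, Finset.card_filter_add_card_filter_not, hS, Nat.card_Icc]
    omega
  -- |A| * α ≤ σ n ≤ K
  have hAbound : (A.card : ℝ) * α ≤ (K : ℝ) := by
    have h1 : (A.card : ℝ) * α ≤ ∑ i ∈ A, g i := by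
      have := Finset.card_nsmul_le_sum A g α (fun i hi => (Finset.mem_filter.mp hi).2)
      simpa [nsmul_eq_mul] using this
    have h2 : ∑ i ∈ A, g i ≤ ∑ i ∈ S, g i := by
      apply Finset.sum_le_sum_of_subset_of_nonneg (Finset.filter_subset _ _)
      intro i hi _; exact (hgpos i hi).le
    have h3 : (σ n : ℝ) ≤ (K : ℝ) := by exact_mod_cast hσn
    have h4 := hsum_g n
    rw [hσ0] at h4
    simp only [Nat.cast_zero, sub_zero] at h4
    rw [hS] at *
    linarith
  -- |B| * (γ/α) ≤ R
  have hBbound : (B.card : ℝ) * (γ / α) ≤ R := by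
    have h1 : (B.card : ℝ) * (γ / α) ≤ ∑ i ∈ B, D i := by
      have : ∀ i ∈ B, γ / α ≤ D i := by
        intro i hi
        obtain ⟨hiS, hlt⟩ := Finset.mem_filter.mp hi
        have hgi := hgpos i hiS
        have h5 : γ / α ≤ γ / g i :=
          div_le_div_of_nonneg_left hγ.le hgi (le_of_not_ge hlt)
        exact h5.trans (hD i hiS)
      simpa [nsmul_eq_mul] using Finset.card_nsmul_le_sum B D (γ / α) this
    have h2 : ∑ i ∈ B, D i ≤ ∑ i ∈ S, D i := by
      apply Finset.sum_le_sum_of_subset_of_nonneg (Finset.filter_subset _ _)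
      intro i hi _
      exact le_trans (le_of_lt (div_pos hγ (hgpos i hi))) (hD i hi)
    linarith
  have hA' : (A.card : ℝ) ≤ K / α := by
    rw [le_div_iff₀ hα]; exact hAbound
  have hB' : (B.card : ℝ) ≤ R * α / γ := by
    calc (B.card : ℝ) ≤ R / (γ / α) := (le_div_iff₀ (div_pos hγ hα)).mpr hBbound
      _ = R * α / γ := by field_simp
  calc (n : ℝ) = (A.card : ℝ) + (B.card : ℝ) := by exact_mod_cast hcard.symm
    _ ≤ K / α + R * α / γ := add_le_add hA' hB'
end

section
/- Let d, n ≥ 1 be integers, λ > 0 and H ≥ 1 be reals. Let φ₁, …, φₙ ∈ ℝ^d with ‖φₗ‖ ≤ 1 for every l, and let r₁,…,rₙ and v₁,…,vₙ be reals with 0 ≤ rₗ ≤ 1 and 0 ≤ vₗ ≤ H. Set Λ = λ·I_d + ∑_{l=1}^n φₗφₗᵀ and ŵ = Λ⁻¹ ∑_{l=1}^n (rₗ + vₗ) φₗ. Then ‖ŵ‖ ≤ 2H·√(n·d/λ). -/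
open Matrix

lemma aux_vmv (d : ℕ) (v x : Fin d → ℝ) : vecMulVec v v *ᵥ x = (v ⬝ᵥ x) • v := by
  funext i
  simp [mulVec, vecMulVec, dotProduct, Finset.mul_sum, mul_comm, mul_assoc, mul_left_comm]

lemma aux_sum_mulVec (d n : ℕ) (M : Fin n → Matrix (Fin d) (Fin d) ℝ) (x : Fin d → ℝ) :
    (∑ l, M l) *ᵥ x = ∑ l, M l *ᵥ x := by
  funext i
  simp [mulVec, dotProduct, Finset.sum_apply, Finset.sum_mul, Matrix.sum_apply]
  rw [Finset.sum_comm]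

lemma aux_dot_sum (d n : ℕ) (x : Fin d → ℝ) (f : Fin n → Fin d → ℝ) :
    x ⬝ᵥ ∑ l, f l = ∑ l, x ⬝ᵥ f l := by
  simp [dotProduct, Finset.mul_sum, Finset.sum_apply]
  rw [Finset.sum_comm]

/-- Bound on the norm of the unperturbed regularized least-squares (LSVI)
estimator: `‖ŵ‖ ≤ 2 H √(n d / λ)`. -/
theorem stmt1 (d n : ℕ) (hd : 1 ≤ d) (hn : 1 ≤ n) (lam H : ℝ) (hlam : 0 < lam) (hH : 1 ≤ H)
    (φ : Fin n → Fin d → ℝ) (hφ : ∀ l, Real.sqrt (φ l ⬝ᵥ φ l) ≤ 1)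
    (r v : Fin n → ℝ) (hr : ∀ l, 0 ≤ r l ∧ r l ≤ 1) (hv : ∀ l, 0 ≤ v l ∧ v l ≤ H)
    (Λ : Matrix (Fin d) (Fin d) ℝ)
    (hΛ : Λ = lam • (1 : Matrix (Fin d) (Fin d) ℝ) + ∑ l, vecMulVec (φ l) (φ l))
    (w : Fin d → ℝ) (hw : w = Λ⁻¹ *ᵥ ∑ l, (r l + v l) • φ l) :
    Real.sqrt (w ⬝ᵥ w) ≤ 2 * H * Real.sqrt (n * d / lam) := by
  -- quadratic form identity
  have hquad : ∀ x : Fin d → ℝ, x ⬝ᵥ (Λ *ᵥ x) = lam * (x ⬝ᵥ x) + ∑ l, (φ l ⬝ᵥ x) ^ 2 := by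
    intro x
    rw [hΛ, Matrix.add_mulVec, aux_sum_mulVec, Matrix.smul_mulVec,
      Matrix.one_mulVec, dotProduct_add, dotProduct_smul, aux_dot_sum]
    congr 1
    refine Finset.sum_congr rfl fun l _ => ?_
    rw [aux_vmv, dotProduct_smul, dotProduct_comm x (φ l)]
    rw [smul_eq_mul, sq]
  -- Λ is positive definite, hence invertible
  have hpd : Λ.PosDef := by
    rw [Matrix.posDef_iff_dotProduct_mulVec]
    constructor
    · rw [hΛ]
      unfold Matrix.IsHermitian
      ext i j
      simp [Matrix.vecMulVec, Matrix.one_apply, Matrix.sum_apply, mul_comm, eq_comm]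
    · intro x hx
      have hst : star x = x := by funext i; simp
      rw [hst, hquad]
      have h1 : 0 < lam * (x ⬝ᵥ x) := by
        apply mul_pos hlam
        have hxx : x ⬝ᵥ x = ∑ i, x i ^ 2 := by simp [dotProduct, sq]
        rw [hxx]
        rcases Function.ne_iff.mp hx with ⟨i, hi⟩
        refine Finset.sum_pos' (fun j _ => sq_nonneg _) ⟨i, Finset.mem_univ i, ?_⟩
        exact lt_of_le_of_ne (sq_nonneg _) (Ne.symm (pow_ne_zero 2 hi))
      have h2 : (0:ℝ) ≤ ∑ l, (φ l ⬝ᵥ x) ^ 2 := Finset.sum_nonneg fun l _ => sq_nonneg _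
      linarith
  have hΛw : Λ *ᵥ w = ∑ l, (r l + v l) • φ l := by
    rw [hw, Matrix.mulVec_mulVec,
      Matrix.mul_nonsing_inv _ ((Matrix.isUnit_iff_isUnit_det _).mp hpd.isUnit),
      Matrix.one_mulVec]
  set S : ℝ := ∑ l, (φ l ⬝ᵥ w) ^ 2 with hS
  set E : ℝ := ∑ l, (r l + v l) * (φ l ⬝ᵥ w) with hE
  have hES : lam * (w ⬝ᵥ w) + S = E := by
    rw [← hquad w, hΛw, aux_dot_sum, hE]
    refine Finset.sum_congr rfl fun l _ => ?_
    rw [dotProduct_smul, dotProduct_comm w (φ l), smul_eq_mul]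
  have hSnn : 0 ≤ S := Finset.sum_nonneg fun l _ => sq_nonneg _
  have hwnn : 0 ≤ w ⬝ᵥ w := by
    have hxx : w ⬝ᵥ w = ∑ i, w i ^ 2 := by simp [dotProduct, sq]
    rw [hxx]; exact Finset.sum_nonneg fun i _ => sq_nonneg _
  -- Cauchy–Schwarz
  have hCS : E ^ 2 ≤ (∑ l : Fin n, (r l + v l) ^ 2) * S :=
    Finset.sum_mul_sq_le_sq_mul_sq _ _ _
  have hu2 : (∑ l : Fin n, (r l + v l) ^ 2) ≤ n * (2 * H) ^ 2 := by
    calc (∑ l : Fin n, (r l + v l) ^ 2) ≤ ∑ l : Fin n, (2 * H) ^ 2 := by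
          refine Finset.sum_le_sum fun l _ => ?_
          have h1 := hr l; have h2 := hv l
          nlinarith [h1.1, h1.2, h2.1, h2.2]
      _ = n * (2 * H) ^ 2 := by simp [mul_comm]
  have hn1 : (1:ℝ) ≤ n := by exact_mod_cast hn
  have hd1 : (1:ℝ) ≤ d := by exact_mod_cast hd
  have hcnn : (0:ℝ) ≤ 4 * H ^ 2 * n := by positivity
  have hEle : E ≤ 4 * H ^ 2 * n := by
    have hSE : S ≤ E := by nlinarith
    have hEnn : 0 ≤ E := by linarith
    have h1 : E ^ 2 ≤ (n * (2 * H) ^ 2) * S :=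
      le_trans hCS (mul_le_mul_of_nonneg_right hu2 hSnn)
    have h2 : (n * (2 * H) ^ 2) * S ≤ (n * (2 * H) ^ 2) * E :=
      mul_le_mul_of_nonneg_left hSE (by positivity)
    nlinarith [h1, h2, hEnn, hcnn]
  have hww : w ⬝ᵥ w ≤ 4 * H ^ 2 * (n * d / lam) := by
    have h1 : lam * (w ⬝ᵥ w) ≤ 4 * H ^ 2 * n := by linarith
    have h2 : lam * (w ⬝ᵥ w) ≤ 4 * H ^ 2 * (n * d) := by nlinarith
    calc w ⬝ᵥ w = lam * (w ⬝ᵥ w) / lam := by field_simp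
      _ ≤ 4 * H ^ 2 * (n * d) / lam := by
          gcongr
      _ = 4 * H ^ 2 * (n * d / lam) := by ring
  calc Real.sqrt (w ⬝ᵥ w) ≤ Real.sqrt (4 * H ^ 2 * (n * d / lam)) := Real.sqrt_le_sqrt hww
    _ = 2 * H * Real.sqrt (n * d / lam) := by
        rw [Real.sqrt_mul (by positivity)]
        congr 1
        rw [show (4 : ℝ) * H ^ 2 = (2 * H) ^ 2 by ring, Real.sqrt_sq (by linarith)]
end

section
/- Let Λ be a symmetric positive definite d×d real matrix and let Φ be a d×n real matrix. Then for every x ∈ ℝ^d, 0 ≤ xᵀΛ⁻¹x − xᵀ(Λ + ΦΦᵀ)⁻¹x ≤ ‖ΦᵀΛ⁻¹x‖². -/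
open Matrix

/-- Woodbury-type bound: for positive definite `Λ` and any `Φ`,
`0 ≤ xᵀΛ⁻¹x − xᵀ(Λ + ΦΦᵀ)⁻¹x ≤ ‖ΦᵀΛ⁻¹x‖²`. -/
theorem stmt5 (d n : ℕ) (Λ : Matrix (Fin d) (Fin d) ℝ) (hΛ : Λ.PosDef)
    (Φ : Matrix (Fin d) (Fin n) ℝ) (x : Fin d → ℝ) :
    0 ≤ x ⬝ᵥ (Λ⁻¹ *ᵥ x) - x ⬝ᵥ ((Λ + Φ * Φᵀ)⁻¹ *ᵥ x) ∧
      x ⬝ᵥ (Λ⁻¹ *ᵥ x) - x ⬝ᵥ ((Λ + Φ * Φᵀ)⁻¹ *ᵥ x) ≤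
        (Φᵀ *ᵥ (Λ⁻¹ *ᵥ x)) ⬝ᵥ (Φᵀ *ᵥ (Λ⁻¹ *ᵥ x)) := by
  have hT : Φᴴ = Φᵀ := by ext i j; simp
  have hPsd : (Φ * Φᵀ).PosSemidef := by
    have := posSemidef_self_mul_conjTranspose Φ
    rwa [hT] at this
  set B := Λ + Φ * Φᵀ with hB
  have hBpd : B.PosDef := hΛ.add_posSemidef hPsd
  set y := Λ⁻¹ *ᵥ x with hy
  set z := B⁻¹ *ᵥ x with hz
  have hΛy : Λ *ᵥ y = x := by
    rw [hy, mulVec_mulVec, Matrix.mul_nonsing_inv _ hΛ.det_pos.ne'.isUnit, one_mulVec]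
  have hBz : B *ᵥ z = x := by
    rw [hz, mulVec_mulVec, Matrix.mul_nonsing_inv _ hBpd.det_pos.ne'.isUnit, one_mulVec]
  have hΛsymm : Λᵀ = Λ := by
    have h := hΛ.isHermitian.eq
    ext i j
    have := congrFun (congrFun h i) j
    simpa using this
  have hBsymm : Bᵀ = B := by
    have h := hBpd.isHermitian.eq
    ext i j
    have := congrFun (congrFun h i) j
    simpa using this
  set u := Φᵀ *ᵥ y with hu
  set v := Φᵀ *ᵥ z with hv
  -- generic flip lemma
  have flip : ∀ (A : Matrix (Fin d) (Fin d) ℝ) (a b : Fin d → ℝ),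
      (A *ᵥ a) ⬝ᵥ b = a ⬝ᵥ (Aᵀ *ᵥ b) := by
    intro A a b
    rw [dotProduct_mulVec, vecMul_transpose, dotProduct_comm]
  -- D = v ⬝ᵥ u
  have hD : x ⬝ᵥ y - x ⬝ᵥ z = v ⬝ᵥ u := by
    have h1 : x ⬝ᵥ y = z ⬝ᵥ x + v ⬝ᵥ u := by
      calc x ⬝ᵥ y = (B *ᵥ z) ⬝ᵥ y := by rw [hBz]
        _ = z ⬝ᵥ (B *ᵥ y) := by rw [flip, hBsymm]
        _ = z ⬝ᵥ (Λ *ᵥ y) + z ⬝ᵥ ((Φ * Φᵀ) *ᵥ y) := by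
            rw [hB, add_mulVec, dotProduct_add]
        _ = z ⬝ᵥ x + v ⬝ᵥ u := by
            rw [hΛy]
            congr 1
            rw [← mulVec_mulVec, dotProduct_mulVec, ← mulVec_transpose, ← hv]
    rw [h1, dotProduct_comm z x]
    ring
  -- u = v + M *ᵥ v
  set M := Φᵀ * Λ⁻¹ * Φ with hM
  have huv : u = v + M *ᵥ v := by
    have hyz : y - z = Λ⁻¹ *ᵥ (Φ *ᵥ v) := by
      have h1 : Λ *ᵥ (y - z) = Φ *ᵥ v := by
        rw [mulVec_sub, hΛy, ← hBz, hB, add_mulVec]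
        simp [hv, mulVec_mulVec]
      calc y - z = Λ⁻¹ *ᵥ (Λ *ᵥ (y - z)) := by
            rw [mulVec_mulVec, Matrix.nonsing_inv_mul _ hΛ.det_pos.ne'.isUnit, one_mulVec]
        _ = Λ⁻¹ *ᵥ (Φ *ᵥ v) := by rw [h1]
    have : u - v = M *ᵥ v := by
      rw [hu, hv, ← mulVec_sub, hyz, hM, ← mulVec_mulVec, ← mulVec_mulVec]
    linear_combination (norm := module) this
  -- M is PSD
  have hMpsd : M.PosSemidef := by
    have := (hΛ.inv.posSemidef).conjTranspose_mul_mul_same Φ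
    rwa [hT] at this
  have hMnn : ∀ w : Fin n → ℝ, 0 ≤ w ⬝ᵥ (M *ᵥ w) := by
    intro w
    have := hMpsd.dotProduct_mulVec_nonneg w
    simpa using this
  have hself : ∀ w : Fin n → ℝ, 0 ≤ w ⬝ᵥ w := fun w =>
    Finset.sum_nonneg fun i _ => mul_self_nonneg _
  constructor
  · rw [hD, huv, dotProduct_add]
    exact add_nonneg (hself v) (hMnn v)
  · rw [hD, huv]
    have expand : (v + M *ᵥ v) ⬝ᵥ (v + M *ᵥ v) - v ⬝ᵥ (v + M *ᵥ v)
        = (M *ᵥ v) ⬝ᵥ v + (M *ᵥ v) ⬝ᵥ (M *ᵥ v) := by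
      simp only [dotProduct_add, add_dotProduct]
      ring
    have h1 : 0 ≤ (M *ᵥ v) ⬝ᵥ v := by rw [dotProduct_comm]; exact hMnn v
    linarith [hself (M *ᵥ v)]
end

section
/- Let S be a set, A a nonempty finite set, N ≥ 1 an integer, c a real number, and φ : S × A → ℝ^d a map with ‖φ(s,a)‖ ≤ 1 for all (s,a). For w = (w¹,…,w^N) ∈ (ℝ^d)^N define V_w : S → ℝ by V_w(s) = max_{a ∈ A} max( min( max_{1≤n≤N} φ(s,a)ᵀ wⁿ , c ), 0 ), and let 𝒱 = { V_w : ‖wⁿ‖ ≤ B for all n }, where B > 0. Then for every ε with 0 < ε ≤ B there exists a finite subset 𝒞 ⊆ 𝒱 of cardinality at most (3B/ε)^{dN} such that for every V ∈ 𝒱 there is V' ∈ 𝒞 with |V(s) − V'(s)| ≤ ε for every s ∈ S. -/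
open Matrix

open Metric MeasureTheory
open scoped ENNReal


lemma stmt9_card_le (d : ℕ) {B ε : ℝ} (hB : 0 < B) (hε : 0 < ε) (hεB : ε ≤ B)
    (F : Finset (EuclideanSpace ℝ (Fin d)))
    (hFB : ∀ x ∈ F, ‖x‖ ≤ B)
    (hsep : (F : Set (EuclideanSpace ℝ (Fin d))).Pairwise fun x y => ε < dist x y) :
    (F.card : ℝ) ≤ (3 * B / ε) ^ d := by
  have hfr : Module.finrank ℝ (EuclideanSpace ℝ (Fin d)) = d := finrank_euclideanSpace_fin
  set v := volume (ball (0 : EuclideanSpace ℝ (Fin d)) 1) with hv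
  have hv0 : v ≠ 0 := (measure_ball_pos _ _ one_pos).ne'
  have hvt : v ≠ ⊤ := measure_ball_lt_top.ne
  have hε2 : (0:ℝ) < ε / 2 := by linarith
  have hballvol : ∀ x : EuclideanSpace ℝ (Fin d),
      volume (ball x (ε/2)) = ENNReal.ofReal ((ε/2) ^ d) * v := by
    intro x
    rw [Measure.addHaar_ball_of_pos volume x hε2, hfr]
  have hdisj : (F : Set (EuclideanSpace ℝ (Fin d))).PairwiseDisjoint fun x => ball x (ε/2) := by
    intro x hx y hy hxy
    exact ball_disjoint_ball (by linarith [hsep hx hy hxy])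
  have hsum : ∑ i ∈ F, volume (ball i (ε/2)) = volume (⋃ i ∈ F, ball i (ε/2)) :=
    (measure_biUnion_finset hdisj fun i _ => measurableSet_ball).symm
  have hsub : (⋃ i ∈ F, ball i (ε/2)) ⊆ ball (0 : EuclideanSpace ℝ (Fin d)) (B + ε/2) := by
    intro x hx
    simp only [Set.mem_iUnion] at hx
    obtain ⟨i, hi, hxi⟩ := hx
    have h1 : dist x i < ε/2 := mem_ball.mp hxi
    have h2 : dist i 0 ≤ B := by simpa using hFB i hi
    have h3 := dist_triangle x i 0
    simp only [mem_ball, dist_zero_right] at *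
    linarith
  have key : (F.card : ℝ≥0∞) * (ENNReal.ofReal ((ε/2) ^ d) * v)
      ≤ ENNReal.ofReal ((B + ε/2) ^ d) * v := by
    calc (F.card : ℝ≥0∞) * (ENNReal.ofReal ((ε/2) ^ d) * v)
        = ∑ i ∈ F, volume (ball i (ε/2)) := by
          rw [Finset.sum_congr rfl fun i _ => hballvol i, Finset.sum_const, nsmul_eq_mul]
      _ = volume (⋃ i ∈ F, ball i (ε/2)) := hsum
      _ ≤ volume (ball (0 : EuclideanSpace ℝ (Fin d)) (B + ε/2)) := measure_mono hsub
      _ = ENNReal.ofReal ((B + ε/2) ^ d) * v := by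
          rw [Measure.addHaar_ball_of_pos volume _ (by linarith : (0:ℝ) < B + ε/2), hfr]
  have key2 : (F.card : ℝ≥0∞) * ENNReal.ofReal ((ε/2) ^ d) ≤ ENNReal.ofReal ((B + ε/2) ^ d) := by
    rw [← ENNReal.mul_le_mul_iff_left hv0 hvt, mul_assoc]
    exact key
  have key3 : (F.card : ℝ) * (ε/2) ^ d ≤ (B + ε/2) ^ d := by
    rw [← ENNReal.ofReal_natCast, ← ENNReal.ofReal_mul (by positivity)] at key2
    exact (ENNReal.ofReal_le_ofReal_iff (by positivity)).mp key2
  have hpow : (0:ℝ) < (ε/2) ^ d := by positivity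
  have hmain : (F.card : ℝ) ≤ ((B + ε/2) / (ε/2)) ^ d := by
    rw [div_pow, le_div_iff₀ hpow]
    exact key3
  refine hmain.trans (pow_le_pow_left₀ (by positivity) ?_ d)
  rw [div_le_div_iff₀ (by linarith) hε]
  nlinarith

lemma stmt9_sqrt_dot (d : ℕ) (x : Fin d → ℝ) :
    Real.sqrt (x ⬝ᵥ x) = ‖(WithLp.equiv 2 (Fin d → ℝ)).symm x‖ := by
  rw [EuclideanSpace.norm_eq]
  congr 1
  simp [dotProduct, Real.norm_eq_abs, sq_abs, sq]

lemma stmt9_net (d : ℕ) {B ε : ℝ} (hB : 0 < B) (hε : 0 < ε) (hεB : ε ≤ B) :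
    ∃ T : Finset (Fin d → ℝ), (∀ t ∈ T, Real.sqrt (t ⬝ᵥ t) ≤ B) ∧
      ((T.card : ℝ) ≤ (3 * B / ε) ^ d) ∧
      ∀ x : Fin d → ℝ, Real.sqrt (x ⬝ᵥ x) ≤ B →
        ∃ t ∈ T, Real.sqrt ((x - t) ⬝ᵥ (x - t)) ≤ ε := by
  -- work in Euclidean space
  set E := EuclideanSpace ℝ (Fin d) with hE
  obtain ⟨M, hM⟩ : ∃ M, Maximal
      (· ∈ {s : Set E | s ⊆ closedBall 0 B ∧ s.Pairwise fun x y => ε < dist x y}) M := by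
    apply zorn_subset
    intro c hcS hchain
    refine ⟨⋃₀ c, ⟨?_, ?_⟩, fun s hs => Set.subset_sUnion_of_mem hs⟩
    · exact Set.sUnion_subset fun s hs => (hcS hs).1
    · intro x hx y hy hxy
      obtain ⟨s1, hs1, hx1⟩ := hx
      obtain ⟨s2, hs2, hy2⟩ := hy
      rcases hchain.total hs1 hs2 with h | h
      · exact (hcS hs2).2 (h hx1) hy2 hxy
      · exact (hcS hs1).2 hx1 (h hy2) hxy
  obtain ⟨⟨hMB, hMsep⟩, hMmax⟩ := hM
  -- every finite subset of M is small
  have hcard : ∀ F : Finset E, ↑F ⊆ M → (F.card : ℝ) ≤ (3 * B / ε) ^ d := by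
    intro F hF
    exact stmt9_card_le d hB hε hεB F
      (fun x hx => by simpa [dist_zero_right] using mem_closedBall.mp (hMB (hF hx)))
      (hMsep.mono hF)
  -- M is finite
  have hfin : M.Finite := by
    by_contra hinf
    obtain ⟨F, hFM, hFcard⟩ := Set.Infinite.exists_subset_card_eq hinf
      (⌊(3 * B / ε) ^ d⌋₊ + 1)
    have h1 := hcard F hFM
    rw [hFcard] at h1
    have h2 := Nat.lt_floor_add_one ((3 * B / ε) ^ d)
    push_cast at h1
    linarith
  -- covering property of M
  have hcover : ∀ x : E, ‖x‖ ≤ B → ∃ t ∈ M, dist x t ≤ ε := by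
    intro x hx
    by_contra hno
    push_neg at hno
    have hxM : insert x M ∈ {s : Set E | s ⊆ closedBall 0 B ∧
        s.Pairwise fun x y => ε < dist x y} := by
      constructor
      · exact Set.insert_subset (by simpa [mem_closedBall, dist_zero_right] using hx) hMB
      · haveI : Std.Symm (fun x y : E => ε < dist x y) := ⟨fun a b h => by rwa [dist_comm]⟩
        rw [Set.pairwise_insert_of_symm]
        exact ⟨hMsep, fun b hb _ => hno b hb⟩
    have := hMmax hxM (Set.subset_insert x M) (Set.mem_insert x M)
    have h0 := hno x this
    rw [dist_self] at h0
    linarith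
  -- transfer back
  refine ⟨hfin.toFinset.image (WithLp.equiv 2 (Fin d → ℝ)), ?_, ?_, ?_⟩
  · intro t ht
    simp only [Finset.mem_image, Set.Finite.mem_toFinset] at ht
    obtain ⟨y, hy, rfl⟩ := ht
    rw [stmt9_sqrt_dot]
    simpa [dist_zero_right] using mem_closedBall.mp (hMB hy)
  · refine le_trans ?_ (hcard hfin.toFinset (by simp))
    exact_mod_cast Nat.cast_le.mpr (Finset.card_image_le)
  · intro x hx
    rw [stmt9_sqrt_dot] at hx
    obtain ⟨t, htM, htx⟩ := hcover _ hx
    refine ⟨WithLp.equiv 2 (Fin d → ℝ) t, ?_, ?_⟩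
    · exact Finset.mem_image_of_mem _ (hfin.mem_toFinset.mpr htM)
    · rw [stmt9_sqrt_dot]
      have : (WithLp.equiv 2 (Fin d → ℝ)).symm
          (x - WithLp.equiv 2 (Fin d → ℝ) t)
          = (WithLp.equiv 2 (Fin d → ℝ)).symm x - t := rfl
      rw [this]
      rw [← dist_eq_norm]
      exact htx

lemma stmt9_ciSup_le_add {ι : Type*} [Fintype ι] [Nonempty ι] {f g : ι → ℝ} {ε : ℝ}
    (h : ∀ i, f i ≤ g i + ε) : (⨆ i, f i) ≤ (⨆ i, g i) + ε :=
  ciSup_le fun i => (h i).trans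
    (add_le_add_left (le_ciSup (Set.Finite.bddAbove (Set.finite_range g)) i) ε)

lemma stmt9_abs_ciSup {ι : Type*} [Fintype ι] [Nonempty ι] {f g : ι → ℝ} {ε : ℝ}
    (h : ∀ i, |f i - g i| ≤ ε) : |(⨆ i, f i) - ⨆ i, g i| ≤ ε := by
  rw [abs_sub_le_iff]
  constructor
  · have := stmt9_ciSup_le_add (f := f) (g := g) fun i => by
      have := abs_le.mp (h i); linarith
    linarith
  · have := stmt9_ciSup_le_add (f := g) (g := f) fun i => by
      have := abs_le.mp (h i); linarith
    linarith

lemma stmt9_cs (d : ℕ) (x y : Fin d → ℝ) :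
    |x ⬝ᵥ y| ≤ Real.sqrt (x ⬝ᵥ x) * Real.sqrt (y ⬝ᵥ y) := by
  rw [stmt9_sqrt_dot, stmt9_sqrt_dot]
  have h1 : x ⬝ᵥ y = (inner ℝ ((WithLp.equiv 2 (Fin d → ℝ)).symm x)
      ((WithLp.equiv 2 (Fin d → ℝ)).symm y) : ℝ) := by
    simp [PiLp.inner_apply, RCLike.inner_apply, dotProduct, mul_comm]
  rw [h1]
  exact abs_real_inner_le_norm _ _

/-- Covering-number lemma for the class of truncated optimistic value
functions with multi-sampling parameter `N`: there is an `ε`-cover in the sup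
distance of cardinality at most `(3B/ε)^{dN}`. -/
theorem stmt9 (d N : ℕ) (hN : 1 ≤ N) (S A : Type*) [Fintype A] [Nonempty A]
    (c B ε : ℝ) (hB : 0 < B) (hε : 0 < ε) (hεB : ε ≤ B)
    (φ : S → A → Fin d → ℝ)
    (hφ : ∀ s a, Real.sqrt (φ s a ⬝ᵥ φ s a) ≤ 1)
    (V : (Fin N → Fin d → ℝ) → S → ℝ)
    (hV : ∀ w s, V w s = ⨆ a : A, max (min (⨆ n : Fin N, φ s a ⬝ᵥ w n) c) 0)
    (𝒱 : Set (S → ℝ))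
    (h𝒱 : 𝒱 = {f | ∃ w : Fin N → Fin d → ℝ,
      (∀ n, Real.sqrt (w n ⬝ᵥ w n) ≤ B) ∧ f = V w}) :
    ∃ C : Set (S → ℝ), C ⊆ 𝒱 ∧ C.Finite ∧
      (C.ncard : ℝ) ≤ (3 * B / ε) ^ (d * N) ∧
      ∀ f ∈ 𝒱, ∃ g ∈ C, ∀ s, |f s - g s| ≤ ε := by
  classical
  have hNfin : Nonempty (Fin N) := Fin.pos_iff_nonempty.mp hN
  subst h𝒱
  obtain ⟨T, hTB, hTcard, hTnet⟩ := stmt9_net d hB hε hεB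
  set WF : Finset (Fin N → Fin d → ℝ) := Fintype.piFinset (fun _ : Fin N => T) with hWF
  refine ⟨↑(WF.image V), ?_, (WF.image V).finite_toSet, ?_, ?_⟩
  · -- C ⊆ 𝒱
    intro g hg
    simp only [Finset.coe_image, Set.mem_image, Finset.mem_coe] at hg
    obtain ⟨w, hw, rfl⟩ := hg
    rw [hWF, Fintype.mem_piFinset] at hw
    exact ⟨w, fun n => hTB _ (hw n), rfl⟩
  · -- cardinality
    rw [Set.ncard_coe_finset]
    have h1 : (WF.image V).card ≤ T.card ^ N := by
      refine (Finset.card_image_le).trans ?_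
      rw [hWF, Fintype.card_piFinset]
      simp
    have h2 : ((WF.image V).card : ℝ) ≤ (T.card : ℝ) ^ N := by exact_mod_cast h1
    refine h2.trans ?_
    rw [pow_mul]
    exact pow_le_pow_left₀ (by positivity) hTcard N
  · -- covering
    rintro f ⟨w, hw, rfl⟩
    choose t ht1 ht2 using fun n => hTnet (w n) (hw n)
    refine ⟨V t, ?_, ?_⟩
    · exact Finset.mem_coe.mpr (Finset.mem_image_of_mem V (by
        rw [hWF, Fintype.mem_piFinset]; exact ht1))
    · intro s
      rw [hV, hV]
      refine stmt9_abs_ciSup fun a => ?_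
      have hsup : |(⨆ n : Fin N, φ s a ⬝ᵥ w n) - ⨆ n : Fin N, φ s a ⬝ᵥ t n| ≤ ε := by
        refine stmt9_abs_ciSup fun n => ?_
        rw [← dotProduct_sub]
        calc |φ s a ⬝ᵥ (w n - t n)|
            ≤ Real.sqrt (φ s a ⬝ᵥ φ s a) * Real.sqrt ((w n - t n) ⬝ᵥ (w n - t n)) :=
              stmt9_cs d _ _
          _ ≤ 1 * ε := mul_le_mul (hφ s a) (ht2 n) (Real.sqrt_nonneg _) zero_le_one
          _ = ε := one_mul ε
      calc |max (min (⨆ n : Fin N, φ s a ⬝ᵥ w n) c) 0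
              - max (min (⨆ n : Fin N, φ s a ⬝ᵥ t n) c) 0|
          ≤ max |min (⨆ n : Fin N, φ s a ⬝ᵥ w n) c
              - min (⨆ n : Fin N, φ s a ⬝ᵥ t n) c| |(0:ℝ) - 0| :=
            abs_max_sub_max_le_max _ _ _ _
        _ = |min (⨆ n : Fin N, φ s a ⬝ᵥ w n) c - min (⨆ n : Fin N, φ s a ⬝ᵥ t n) c| := by
            simp
        _ ≤ max |(⨆ n : Fin N, φ s a ⬝ᵥ w n) - ⨆ n : Fin N, φ s a ⬝ᵥ t n| |c - c| :=
            abs_min_sub_min_le_max _ _ _ _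
        _ = |(⨆ n : Fin N, φ s a ⬝ᵥ w n) - ⨆ n : Fin N, φ s a ⬝ᵥ t n| := by simp
        _ ≤ ε := hsup
end

section
/- Let Λ₁, Λ, Λ̄, Λ₂ be symmetric positive definite d×d real matrices such that Λ − Λ₁, Λ̄ − Λ, and Λ₂ − Λ̄ are all positive semidefinite, and suppose det(Λ₂) ≤ 3·det(Λ₁). Then for every φ ∈ ℝ^d, √(φᵀΛ⁻¹φ) ≤ 2·√(φᵀΛ̄⁻¹φ). -/
open Matrix

lemma eig_ge_one {d : ℕ} {C : Matrix (Fin d) (Fin d) ℝ} (hC : C.IsHermitian)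
    (h : (C - 1).PosSemidef) (i : Fin d) : 1 ≤ hC.eigenvalues i := by
  set v : Fin d → ℝ := ⇑(hC.eigenvectorBasis i) with hv
  have hvne : v ≠ 0 := by
    have h1 := hC.eigenvectorBasis.orthonormal.1 i
    intro h0
    have : (hC.eigenvectorBasis i) = 0 := by
      ext j; exact congrFun h0 j
    rw [this, norm_zero] at h1; norm_num at h1
  have hmv : (C - 1) *ᵥ v = (hC.eigenvalues i - 1) • v := by
    rw [sub_mulVec, hC.mulVec_eigenvectorBasis, one_mulVec, sub_smul, one_smul]
  have h0 := h.dotProduct_mulVec_nonneg v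
  rw [hmv] at h0
  have hsv : star v = v := by simp
  rw [hsv, dotProduct_smul, smul_eq_mul] at h0
  have hpos : 0 < v ⬝ᵥ v := by
    rcases lt_or_eq_of_le (by simpa using dotProduct_self_star_nonneg (R := ℝ) v : (0:ℝ) ≤ v ⬝ᵥ v) with h' | h'
    · exact h'
    · exact absurd (dotProduct_self_eq_zero.mp h'.symm) hvne
  nlinarith

lemma key {d : ℕ} {C : Matrix (Fin d) (Fin d) ℝ} (hC : C.IsHermitian)
    (h : (C - 1).PosSemidef) :
    1 ≤ C.det ∧ ∀ y : Fin d → ℝ, y ⬝ᵥ y ≤ C.det * (y ⬝ᵥ (C⁻¹ *ᵥ y)) := by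
  set μ := hC.eigenvalues with hμdef
  have hμ : ∀ i, 1 ≤ μ i := eig_ge_one hC h
  have hμ0 : ∀ i, μ i ≠ 0 := fun i => by nlinarith [hμ i]
  have hdet : C.det = ∏ i, μ i := by
    simpa using hC.det_eq_prod_eigenvalues
  have hdet1 : 1 ≤ C.det := by
    rw [hdet]
    calc (1:ℝ) = ∏ _i : Fin d, 1 := by simp
      _ ≤ ∏ i, μ i := Finset.prod_le_prod (fun _ _ => zero_le_one) (fun i _ => hμ i)
  refine ⟨hdet1, ?_⟩
  set U : Matrix (Fin d) (Fin d) ℝ := (hC.eigenvectorUnitary : Matrix (Fin d) (Fin d) ℝ) with hUdef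
  have hspec : C = U * diagonal μ * star U := by
    have := hC.spectral_theorem
    simpa [RCLike.ofReal_real_eq_id] using this
  have hUU : U * star U = 1 := mem_unitaryGroup_iff.mp (hC.eigenvectorUnitary).2
  have hUU' : star U * U = 1 := mem_unitaryGroup_iff'.mp (hC.eigenvectorUnitary).2
  set Dinv : Matrix (Fin d) (Fin d) ℝ := diagonal (fun i => (μ i)⁻¹) with hDdef
  have hDD : diagonal μ * Dinv = 1 := by
    rw [hDdef, diagonal_mul_diagonal]
    have : (fun i => μ i * (μ i)⁻¹) = fun _ => (1:ℝ) := by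
      funext i; exact mul_inv_cancel₀ (hμ0 i)
    rw [this, diagonal_one]
  have hCinv : C⁻¹ = U * Dinv * star U := by
    apply inv_eq_right_inv
    rw [hspec]
    simp only [Matrix.mul_assoc]
    rw [show star U * (U * (Dinv * star U)) = Dinv * star U by
      rw [← Matrix.mul_assoc, hUU', one_mul]]
    rw [show diagonal μ * (Dinv * star U) = star U by
      rw [← Matrix.mul_assoc, hDD, one_mul]]
    exact hUU
  have hsU : star U = Uᵀ := by
    ext i j; simp [Matrix.star_apply]
  intro y
  set z : Fin d → ℝ := Uᵀ *ᵥ y with hzdef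
  have hz1 : ∀ w : Fin d → ℝ, y ⬝ᵥ (U *ᵥ w) = z ⬝ᵥ w := by
    intro w
    rw [dotProduct_mulVec, hzdef, mulVec_transpose]
  have hyy : y ⬝ᵥ y = z ⬝ᵥ z := by
    have : z ⬝ᵥ z = y ⬝ᵥ (U *ᵥ (Uᵀ *ᵥ y)) := (hz1 _).symm
    rw [this, mulVec_mulVec, ← hsU, hUU, one_mulVec]
  have hCy : y ⬝ᵥ (C⁻¹ *ᵥ y) = z ⬝ᵥ (Dinv *ᵥ z) := by
    rw [hCinv, hsU]
    rw [show (U * Dinv * Uᵀ) *ᵥ y = U *ᵥ (Dinv *ᵥ (Uᵀ *ᵥ y)) from by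
      rw [← mulVec_mulVec, ← mulVec_mulVec]]
    rw [hz1]
  rw [hyy, hCy]
  have hzz : z ⬝ᵥ (Dinv *ᵥ z) = ∑ i, z i * ((μ i)⁻¹ * z i) := by
    simp [dotProduct, hDdef, mulVec_diagonal]
  have hzz' : z ⬝ᵥ z = ∑ i, z i * z i := rfl
  rw [hzz, hzz', hdet, Finset.mul_sum]
  apply Finset.sum_le_sum
  intro i _
  have hprod : (∏ j, μ j) * (μ i)⁻¹ = ∏ j ∈ Finset.univ.erase i, μ j := by
    rw [← Finset.mul_prod_erase Finset.univ μ (Finset.mem_univ i),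
      mul_comm (μ i), mul_assoc, mul_inv_cancel₀ (hμ0 i), mul_one]
  have hge : 1 ≤ (∏ j, μ j) * (μ i)⁻¹ := by
    rw [hprod]
    calc (1:ℝ) = ∏ _j ∈ Finset.univ.erase i, 1 := by simp
      _ ≤ ∏ j ∈ Finset.univ.erase i, μ j :=
        Finset.prod_le_prod (fun _ _ => zero_le_one) (fun j _ => hμ j)
  calc z i * z i = 1 * (z i * z i) := by ring
    _ ≤ ((∏ j, μ j) * (μ i)⁻¹) * (z i * z i) :=
        mul_le_mul_of_nonneg_right hge (mul_self_nonneg _)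
    _ = (∏ j, μ j) * (z i * ((μ i)⁻¹ * z i)) := by ring

lemma aux10 {d : ℕ} {A B : Matrix (Fin d) (Fin d) ℝ} (hA : A.PosDef) (hB : B.PosDef)
    (hAB : (B - A).PosSemidef) :
    A.det ≤ B.det ∧ ∀ x : Fin d → ℝ,
      x ⬝ᵥ (A⁻¹ *ᵥ x) ≤ (B.det / A.det) * (x ⬝ᵥ (B⁻¹ *ᵥ x)) := by
  set S := (open scoped MatrixOrder in CFC.sqrt A) with hSdef
  have hS : S.PosSemidef := (open scoped MatrixOrder in Matrix.nonneg_iff_posSemidef.mp (CFC.sqrt_nonneg A))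
  have hSS : S * S = A := (open scoped MatrixOrder in CFC.sqrt_mul_sqrt_self A (Matrix.nonneg_iff_posSemidef.mpr hA.posSemidef))
  have hdetS : S.det * S.det = A.det := by rw [← det_mul, hSS]
  have hdetS0 : S.det ≠ 0 := by
    intro h0
    rw [h0, mul_zero] at hdetS
    exact absurd hdetS.symm (ne_of_gt hA.det_pos)
  have hSu : IsUnit S.det := isUnit_iff_ne_zero.mpr hdetS0
  have hSi : S * S⁻¹ = 1 := mul_nonsing_inv S hSu
  have hSi' : S⁻¹ * S = 1 := nonsing_inv_mul S hSu
  have hSinvh : S⁻¹ᴴ = S⁻¹ := by rw [conjTranspose_nonsing_inv, hS.1.eq]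
  have hSinvt : S⁻¹ᵀ = S⁻¹ := by
    rw [← conjTranspose_eq_transpose_of_trivial, hSinvh]
  set C : Matrix (Fin d) (Fin d) ℝ := S⁻¹ * B * S⁻¹ with hCdef
  have hCh : C.IsHermitian := by
    show Cᴴ = C
    rw [hCdef, conjTranspose_mul, conjTranspose_mul, hSinvh, hB.1.eq, Matrix.mul_assoc]
  have hSAS : S⁻¹ * A * S⁻¹ = 1 := by
    rw [← hSS]
    simp only [Matrix.mul_assoc]
    rw [hSi, Matrix.mul_one, hSi']
  have hC1 : (C - 1).PosSemidef := by
    have hformula : C - 1 = S⁻¹ * (B - A) * S⁻¹ᴴ := by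
      rw [hSinvh, Matrix.mul_sub, Matrix.sub_mul, hSAS, hCdef]
    rw [hformula]
    exact hAB.mul_mul_conjTranspose_same S⁻¹
  have hB' : B = S * C * S := by
    rw [hCdef]
    calc B = (S * S⁻¹) * B * (S⁻¹ * S) := by rw [hSi, hSi', one_mul, mul_one]
      _ = S * (S⁻¹ * B * S⁻¹) * S := by simp only [Matrix.mul_assoc]
  have hdetBC : B.det = A.det * C.det := by
    conv_lhs => rw [hB']
    rw [det_mul, det_mul, ← hdetS]
    ring
  have hdetC : C.det = B.det / A.det := by
    field_simp [ne_of_gt hA.det_pos, hdetBC]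
    rw [hdetBC]; ring
  obtain ⟨hdet1C, hkey⟩ := key hCh hC1
  have hdetC0 : C.det ≠ 0 := by intro h0; rw [h0] at hdet1C; norm_num at hdet1C
  have hCi : C⁻¹ * C = 1 := nonsing_inv_mul C (isUnit_iff_ne_zero.mpr hdetC0)
  have hBinv : B⁻¹ = S⁻¹ * C⁻¹ * S⁻¹ := by
    apply inv_eq_left_inv
    conv_lhs => rw [hB']
    simp only [Matrix.mul_assoc]
    rw [show S⁻¹ * (S * (C * S)) = C * S by rw [← Matrix.mul_assoc, hSi', one_mul]]
    rw [show C⁻¹ * (C * S) = S by rw [← Matrix.mul_assoc, hCi, one_mul]]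
    exact hSi'
  have hAinv : A⁻¹ = S⁻¹ * S⁻¹ := by
    apply inv_eq_left_inv
    conv_lhs => rw [← hSS]
    simp only [Matrix.mul_assoc]
    rw [show S⁻¹ * (S * S) = S by rw [← Matrix.mul_assoc, hSi', one_mul]]
    exact hSi'
  constructor
  · rw [hdetC] at hdet1C
    exact (one_le_div hA.det_pos).mp hdet1C
  · intro x
    set y : Fin d → ℝ := S⁻¹ *ᵥ x with hydef
    have hdp : ∀ w : Fin d → ℝ, x ⬝ᵥ (S⁻¹ *ᵥ w) = y ⬝ᵥ w := by
      intro w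
      rw [dotProduct_mulVec, hydef, ← mulVec_transpose, hSinvt]
    have hxa : x ⬝ᵥ (A⁻¹ *ᵥ x) = y ⬝ᵥ y := by
      rw [hAinv, ← mulVec_mulVec, hdp]
    have hxb : x ⬝ᵥ (B⁻¹ *ᵥ x) = y ⬝ᵥ (C⁻¹ *ᵥ y) := by
      rw [hBinv, ← mulVec_mulVec, ← mulVec_mulVec, hdp]
    rw [hxa, hxb, ← hdetC]
    exact hkey y

/-- Elliptical-potential comparison step: if `Λ₁ ⪯ Λ ⪯ Λ̄ ⪯ Λ₂` (all positive
definite) and `det Λ₂ ≤ 3 det Λ₁`, then `‖φ‖_{Λ⁻¹} ≤ 2 ‖φ‖_{Λ̄⁻¹}`. -/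
theorem stmt10 (d : ℕ) (Λ₁ Λ Λb Λ₂ : Matrix (Fin d) (Fin d) ℝ)
    (h1 : Λ₁.PosDef) (h2 : Λ.PosDef) (h3 : Λb.PosDef) (h4 : Λ₂.PosDef)
    (h12 : (Λ - Λ₁).PosSemidef) (h23 : (Λb - Λ).PosSemidef)
    (h34 : (Λ₂ - Λb).PosSemidef)
    (hdet : Λ₂.det ≤ 3 * Λ₁.det) :
    ∀ φ : Fin d → ℝ,
      Real.sqrt (φ ⬝ᵥ (Λ⁻¹ *ᵥ φ)) ≤ 2 * Real.sqrt (φ ⬝ᵥ (Λb⁻¹ *ᵥ φ)) := by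
  intro φ
  obtain ⟨hd1, -⟩ := aux10 h1 h2 h12
  obtain ⟨-, hineq⟩ := aux10 h2 h3 h23
  obtain ⟨hd3, -⟩ := aux10 h3 h4 h34
  have hΛpos : 0 < Λ.det := h2.det_pos
  have hratio : Λb.det / Λ.det ≤ 3 := by
    rw [div_le_iff₀ hΛpos]
    linarith
  have hnn : 0 ≤ φ ⬝ᵥ (Λb⁻¹ *ᵥ φ) := by
    have := (h3.inv).posSemidef.dotProduct_mulVec_nonneg φ
    simpa using this
  have hmain : φ ⬝ᵥ (Λ⁻¹ *ᵥ φ) ≤ 4 * (φ ⬝ᵥ (Λb⁻¹ *ᵥ φ)) := by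
    calc φ ⬝ᵥ (Λ⁻¹ *ᵥ φ) ≤ (Λb.det / Λ.det) * (φ ⬝ᵥ (Λb⁻¹ *ᵥ φ)) := hineq φ
      _ ≤ 4 * (φ ⬝ᵥ (Λb⁻¹ *ᵥ φ)) := by nlinarith
  calc Real.sqrt (φ ⬝ᵥ (Λ⁻¹ *ᵥ φ))
      ≤ Real.sqrt (4 * (φ ⬝ᵥ (Λb⁻¹ *ᵥ φ))) := Real.sqrt_le_sqrt hmain
    _ = 2 * Real.sqrt (φ ⬝ᵥ (Λb⁻¹ *ᵥ φ)) := by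
        rw [show (4:ℝ) = 2^2 by norm_num, Real.sqrt_mul (by positivity),
          Real.sqrt_sq (by norm_num)]
end

section
/- Let (Ω, ℱ, P) be a probability space, let μ ∈ ℝ and v > 0, let N ≥ 1 be an integer, and let X₁, …, X_N be independent real-valued random variables each with the Gaussian distribution N(μ, v). Then P( max_{1≤n≤N} Xₙ ≥ μ + √v ) ≥ 1 − ( 1 − 1/(2√(2eπ)) )^N. -/
open MeasureTheory ProbabilityTheory
open scoped NNReal ENNReal

lemma aux_exp_neg_le {u : ℝ} (hu : 0 ≤ u) : Real.exp (-u) ≤ 1 - u + u ^ 2 / 2 := by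
  have h := Real.quadratic_le_exp_of_nonneg hu
  have hq : (0:ℝ) < 1 - u + u ^ 2 / 2 := by nlinarith [sq_nonneg (u - 1)]
  have hmul : Real.exp u * Real.exp (-u) = 1 := by
    rw [← Real.exp_add]; simp
  nlinarith [Real.exp_pos u, Real.exp_pos (-u), mul_pos (Real.exp_pos u) hq,
    mul_le_mul_of_nonneg_right h hq.le, sq_nonneg (u ^ 2)]

lemma aux_poly_integral :
    ∫ x in Set.Ioo (0:ℝ) 1, (1 - x ^ 2 / 2 + x ^ 4 / 8) = 103 / 120 := by
  rw [← integral_Ioc_eq_integral_Ioo, ← intervalIntegral.integral_of_le (by norm_num : (0:ℝ) ≤ 1)]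
  have hP : ∀ x : ℝ, HasDerivAt (fun y : ℝ => y - y ^ 3 / 6 + y ^ 5 / 40)
      (1 - x ^ 2 / 2 + x ^ 4 / 8) x := by
    intro x
    have h := ((hasDerivAt_id x).sub ((hasDerivAt_pow 3 x).div_const 6)).add
      ((hasDerivAt_pow 5 x).div_const 40)
    refine h.congr_deriv ?_
    norm_num
    ring
  rw [intervalIntegral.integral_eq_sub_of_hasDerivAt (fun x _ => hP x)
    ((by continuity : Continuous fun x : ℝ => 1 - x ^ 2 / 2 + x ^ 4 / 8).intervalIntegrable 0 1)]
  norm_num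

lemma aux_std_half : gaussianReal 0 1 (Set.Ioi (0:ℝ)) = 1 / 2 := by
  set ν := gaussianReal 0 1 with hν
  have hv1 : (1 : ℝ≥0) ≠ 0 := one_ne_zero
  have hnn : (.mk ((-1:ℝ) ^ 2) (sq_nonneg _) : ℝ≥0) * 1 = 1 := by
    apply NNReal.coe_injective; push_cast; norm_num
  have hmap : ν.map (fun x : ℝ => (-1 : ℝ) * x) = ν := by
    have h := gaussianReal_map_const_mul (μ := 0) (v := 1) (-1 : ℝ)
    simp only [mul_zero, hnn] at h
    exact h
  have hIoiIio : ν (Set.Ioi 0) = ν (Set.Iio 0) := by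
    conv_rhs => rw [← hmap]
    rw [Measure.map_apply (by fun_prop) measurableSet_Iio]
    congr 1
    ext x
    simp
  have h0 : ν ({0} : Set ℝ) = 0 := by
    rw [hν, gaussianReal_apply 0 hv1, setLIntegral_measure_zero _ _ Real.volume_singleton]
  have hIci : ν (Set.Ici 0) = ν (Set.Ioi 0) := by
    refine le_antisymm ?_ (measure_mono Set.Ioi_subset_Ici_self)
    calc ν (Set.Ici 0) ≤ ν (Set.Ioi 0 ∪ {0}) := by
          refine measure_mono fun x hx => ?_
          rcases eq_or_lt_of_le (Set.mem_Ici.mp hx) with h | h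
          · exact Or.inr (by simp [← h])
          · exact Or.inl h
      _ ≤ ν (Set.Ioi 0) + ν {0} := measure_union_le _ _
      _ = ν (Set.Ioi 0) := by rw [h0, add_zero]
  have hsplit : ν (Set.Iio 0) + ν (Set.Ici 0) = 1 := by
    rw [← measure_union (Set.Iio_disjoint_Ici le_rfl) measurableSet_Ici,
      Set.Iio_union_Ici, measure_univ]
  rw [hIci, ← hIoiIio] at hsplit
  have h2 : 2 * ν (Set.Ioi 0) = 1 := by rw [two_mul]; exact hsplit
  rw [ENNReal.eq_div_iff (by norm_num) (by norm_num)]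
  exact h2

lemma aux_std_Ioo :
    gaussianReal 0 1 (Set.Ioo (0:ℝ) 1)
      ≤ ENNReal.ofReal ((Real.sqrt (2 * Real.pi))⁻¹ * (103 / 120)) := by
  rw [gaussianReal_apply_eq_integral 0 one_ne_zero]
  refine ENNReal.ofReal_le_ofReal ?_
  have hbound : ∀ x ∈ Set.Ioo (0:ℝ) 1, gaussianPDFReal 0 1 x
      ≤ (Real.sqrt (2 * Real.pi))⁻¹ * (1 - x ^ 2 / 2 + x ^ 4 / 8) := by
    intro x _
    have h : gaussianPDFReal 0 1 x
        = (Real.sqrt (2 * Real.pi))⁻¹ * Real.exp (-(x ^ 2 / 2)) := by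
      simp only [gaussianPDFReal, NNReal.coe_one, mul_one, sub_zero]
      congr 1
      ring
    rw [h]
    have hexp := aux_exp_neg_le (u := x ^ 2 / 2) (by positivity)
    have hsq : (x ^ 2 / 2) ^ 2 / 2 = x ^ 4 / 8 := by ring
    rw [hsq] at hexp
    exact mul_le_mul_of_nonneg_left hexp (by positivity)
  calc ∫ x in Set.Ioo (0:ℝ) 1, gaussianPDFReal 0 1 x
      ≤ ∫ x in Set.Ioo (0:ℝ) 1, (Real.sqrt (2 * Real.pi))⁻¹ * (1 - x ^ 2 / 2 + x ^ 4 / 8) := by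
        refine setIntegral_mono_on ((integrable_gaussianPDFReal 0 1).integrableOn)
          ?_ measurableSet_Ioo hbound
        exact (Continuous.integrableOn_Ioc (by continuity)).mono_set Set.Ioo_subset_Ioc_self
    _ = (Real.sqrt (2 * Real.pi))⁻¹ * ∫ x in Set.Ioo (0:ℝ) 1, (1 - x ^ 2 / 2 + x ^ 4 / 8) := by
        rw [integral_const_mul]
    _ = (Real.sqrt (2 * Real.pi))⁻¹ * (103 / 120) := by rw [aux_poly_integral]

lemma aux_numeric :
    1 / (2 * Real.sqrt (2 * Real.exp 1 * Real.pi))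
      + (Real.sqrt (2 * Real.pi))⁻¹ * (103 / 120) ≤ 1 / 2 := by
  set A := Real.sqrt (2 * Real.pi) with hA
  set B := Real.sqrt (Real.exp 1) with hB
  have hpi := Real.pi_gt_d6
  have he := Real.exp_one_gt_d9
  have hA0 : (0:ℝ) < A := Real.sqrt_pos.2 (by positivity)
  have hB0 : (0:ℝ) < B := Real.sqrt_pos.2 (Real.exp_pos 1)
  have hABsqrt : Real.sqrt (2 * Real.exp 1 * Real.pi) = A * B := by
    rw [hA, hB, ← Real.sqrt_mul (by positivity)]
    ring_nf
  have hAge : (2.5066 : ℝ) ≤ A := by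
    rw [hA, Real.le_sqrt' (by norm_num)]
    nlinarith
  have hBge : (1.6487 : ℝ) ≤ B := by
    rw [hB, Real.le_sqrt' (by norm_num)]
    nlinarith
  rw [hABsqrt]
  have h1 : 1 / (2 * (A * B)) ≤ 0.121 := by
    rw [div_le_iff₀ (by positivity)]
    nlinarith [mul_nonneg (sub_nonneg.2 hAge) (sub_nonneg.2 hBge)]
  have h2 : A⁻¹ * (103 / 120) ≤ 0.3425 := by
    have hinv : A⁻¹ ≤ (2.5066 : ℝ)⁻¹ := by
      apply inv_anti₀ (by norm_num) hAge
    nlinarith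
  linarith

lemma aux_std_tail :
    ENNReal.ofReal (1 / (2 * Real.sqrt (2 * Real.exp 1 * Real.pi)))
      ≤ gaussianReal 0 1 (Set.Ici (1:ℝ)) := by
  set ν := gaussianReal 0 1 with hν
  have hsub : Set.Ioi (0:ℝ) ⊆ Set.Ioo 0 1 ∪ Set.Ici 1 := by
    intro x hx
    rcases lt_or_ge x 1 with h | h
    · exact Or.inl ⟨hx, h⟩
    · exact Or.inr h
  have hle : ν (Set.Ioi 0) ≤ ν (Set.Ioo 0 1) + ν (Set.Ici 1) :=
    (measure_mono hsub).trans (measure_union_le _ _)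
  rw [aux_std_half] at hle
  have hkey : ENNReal.ofReal (1 / (2 * Real.sqrt (2 * Real.exp 1 * Real.pi)))
      + ENNReal.ofReal ((Real.sqrt (2 * Real.pi))⁻¹ * (103 / 120)) ≤ 1 / 2 := by
    rw [← ENNReal.ofReal_add (by positivity) (by positivity)]
    have : (1 / 2 : ℝ≥0∞) = ENNReal.ofReal (1 / 2) := by
      rw [ENNReal.ofReal_div_of_pos (by norm_num)]
      norm_num
    rw [this]
    exact ENNReal.ofReal_le_ofReal aux_numeric
  have h1 : ENNReal.ofReal (1 / (2 * Real.sqrt (2 * Real.exp 1 * Real.pi)))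
      ≤ 1 / 2 - ENNReal.ofReal ((Real.sqrt (2 * Real.pi))⁻¹ * (103 / 120)) :=
    ENNReal.le_sub_of_add_le_right ENNReal.ofReal_ne_top hkey
  refine h1.trans ?_
  rw [tsub_le_iff_left]
  exact hle.trans (add_le_add_left (aux_std_Ioo) _)

lemma aux_gauss_tail (μ : ℝ) (v : ℝ≥0) (hv : v ≠ 0) :
    ENNReal.ofReal (1 / (2 * Real.sqrt (2 * Real.exp 1 * Real.pi)))
      ≤ gaussianReal μ v (Set.Ici (μ + Real.sqrt v)) := by
  have hs0 : (0:ℝ) < Real.sqrt v := Real.sqrt_pos.2 (by positivity)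
  have hvar : (.mk ((Real.sqrt v) ^ 2) (sq_nonneg _) : ℝ≥0) * 1 = v := by
    apply NNReal.coe_injective
    rw [NNReal.coe_mul, NNReal.coe_one, NNReal.coe_mk, Real.sq_sqrt v.coe_nonneg, mul_one]
  have hmap : (gaussianReal 0 1).map (fun x : ℝ => Real.sqrt v * x + μ) = gaussianReal μ v := by
    have h1 := gaussianReal_map_const_mul (μ := 0) (v := 1) (Real.sqrt v)
    rw [mul_zero, hvar] at h1
    have h2 := gaussianReal_map_add_const (μ := 0) (v := v) μ
    rw [zero_add] at h2
    have hc : (fun x : ℝ => Real.sqrt v * x + μ) = (· + μ) ∘ (fun x => Real.sqrt v * x) := rfl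
    rw [hc, ← Measure.map_map (measurable_add_const μ) (measurable_const_mul _), h1, h2]
  rw [← hmap, Measure.map_apply (by fun_prop) measurableSet_Ici]
  have hpre : (fun x : ℝ => Real.sqrt v * x + μ) ⁻¹' Set.Ici (μ + Real.sqrt v)
      = Set.Ici (1:ℝ) := by
    ext x
    simp only [Set.mem_preimage, Set.mem_Ici]
    constructor
    · intro h
      nlinarith
    · intro h
      nlinarith
  rw [hpre]
  exact aux_std_tail

/-- Multi-sampling optimism: if `X₁, …, X_N` are i.i.d. `N(μ, v)` Gaussians,
then `P(max_n X_n ≥ μ + √v) ≥ 1 − (1 − 1/(2√(2eπ)))^N`. -/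
theorem stmt11 {Ω : Type*} [MeasurableSpace Ω] (P : Measure Ω)
    [IsProbabilityMeasure P]
    (μ : ℝ) (v : ℝ≥0) (hv : 0 < v) (N : ℕ) (hN : 1 ≤ N)
    (X : Fin N → Ω → ℝ) (hmeas : ∀ n, Measurable (X n))
    (hdist : ∀ n, P.map (X n) = gaussianReal μ v)
    (hindep : iIndepFun X P) :
    ENNReal.ofReal (1 - (1 - 1 / (2 * Real.sqrt (2 * Real.exp 1 * Real.pi))) ^ N)
      ≤ P {ω | μ + Real.sqrt v ≤ ⨆ n, X n ω} := by
  set c₀ : ℝ := 1 / (2 * Real.sqrt (2 * Real.exp 1 * Real.pi)) with hc₀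
  set t : ℝ := μ + Real.sqrt v with ht
  have hc₀pos : 0 < c₀ := by
    have : (0:ℝ) < Real.sqrt (2 * Real.exp 1 * Real.pi) :=
      Real.sqrt_pos.2 (by positivity)
    positivity
  have hc₀le1 : c₀ ≤ 1 := by
    rw [hc₀, div_le_one (by positivity)]
    have : (1:ℝ) ≤ Real.sqrt (2 * Real.exp 1 * Real.pi) :=
      (Real.le_sqrt' one_pos).mpr (by nlinarith [Real.pi_gt_d6, Real.exp_one_gt_d9])
    linarith
  set c : ℝ≥0∞ := gaussianReal μ v (Set.Ici t) with hc
  have hctail : ENNReal.ofReal c₀ ≤ c := aux_gauss_tail μ v hv.ne'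
  have h1 : ∀ n, P (X n ⁻¹' Set.Iio t) = 1 - c := by
    intro n
    have hXp : P (X n ⁻¹' Set.Ici t) = c := by
      rw [hc, ← hdist n, Measure.map_apply (hmeas n) measurableSet_Ici]
    have hcompl : X n ⁻¹' Set.Iio t = (X n ⁻¹' Set.Ici t)ᶜ := by
      ext ω; simp [not_le]
    rw [hcompl, measure_compl ((hmeas n) measurableSet_Ici) (measure_ne_top _ _),
      hXp, measure_univ]
  have h2 : P (⋂ n, X n ⁻¹' Set.Iio t) = (1 - c) ^ N := by
    rw [hindep.meas_iInter (fun n => ⟨Set.Iio t, measurableSet_Iio, rfl⟩)]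
    simp [h1]
  have h3 : (1 : ℝ≥0∞) - c ≤ ENNReal.ofReal (1 - c₀) := by
    rw [ENNReal.ofReal_sub _ hc₀pos.le, ENNReal.ofReal_one]
    exact tsub_le_tsub_left hctail 1
  have h4 : P (⋂ n, X n ⁻¹' Set.Iio t) ≤ ENNReal.ofReal ((1 - c₀) ^ N) := by
    rw [h2, ENNReal.ofReal_pow (by linarith)]
    exact pow_le_pow_left' h3 N
  have hms : MeasurableSet (⋂ n, X n ⁻¹' Set.Iio t) :=
    MeasurableSet.iInter fun n => (hmeas n) measurableSet_Iio
  have h5 : (⋂ n, X n ⁻¹' Set.Iio t)ᶜ ⊆ {ω | t ≤ ⨆ n, X n ω} := by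
    intro ω hω
    simp only [Set.mem_compl_iff, Set.mem_iInter, Set.mem_preimage, Set.mem_Iio, not_forall,
      not_lt] at hω
    obtain ⟨n, hn⟩ := hω
    exact hn.trans (le_ciSup (f := fun m => X m ω) (Set.finite_range _).bddAbove n)
  calc ENNReal.ofReal (1 - (1 - c₀) ^ N)
      = 1 - ENNReal.ofReal ((1 - c₀) ^ N) := by
        rw [ENNReal.ofReal_sub _ (pow_nonneg (by linarith) N), ENNReal.ofReal_one]
    _ ≤ 1 - P (⋂ n, X n ⁻¹' Set.Iio t) := tsub_le_tsub_left h4 1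
    _ = P ((⋂ n, X n ⁻¹' Set.Iio t)ᶜ) := by
        rw [measure_compl hms (measure_ne_top _ _), measure_univ]
    _ ≤ P {ω | t ≤ ⨆ n, X n ω} := measure_mono h5
end

section
/- Let λ > 0 and let φ₁,…,φₙ ∈ ℝ^d. Set Λ = λ·I_d + ∑_{l=1}^n φₗφₗᵀ. Then (∑_{l=1}^n φₗ)ᵀ Λ⁻¹ (∑_{l=1}^n φₗ) ≤ n·d. -/
open Matrix Finset

lemma quad_vvT {d : ℕ} (v x : Fin d → ℝ) :
    x ⬝ᵥ (vecMulVec v v *ᵥ x) = (v ⬝ᵥ x) ^ 2 := by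
  simp [dotProduct, mulVec, vecMulVec, Finset.mul_sum, Finset.sum_mul, sq]
  rw [Finset.sum_comm]
  congr 1; ext i; congr 1; ext j; ring

lemma trace_quad {d : ℕ} {B : Matrix (Fin d) (Fin d) ℝ} (v : Fin d → ℝ) :
    (B * vecMulVec v v).trace = v ⬝ᵥ (B *ᵥ v) := by
  simp [trace, Matrix.mul_apply, vecMulVec, dotProduct, mulVec, Finset.mul_sum, Matrix.diag]
  congr 1; ext i; congr 1; ext j; ring

lemma sum_mulVec' {d n : ℕ} (A : Fin n → Matrix (Fin d) (Fin d) ℝ) (x : Fin d → ℝ) :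
    (∑ l, A l) *ᵥ x = ∑ l, A l *ᵥ x := by
  ext i
  simp only [mulVec, dotProduct, Matrix.sum_apply, Finset.sum_apply, Finset.sum_mul]
  exact Finset.sum_comm (s := Finset.univ) (t := Finset.univ) (f := fun j l => A l i j * x j)

lemma double_sum_avg {n : ℕ} (q : Fin n → ℝ) :
    ∑ l, ∑ m, (q l + q m) / 2 = (n : ℝ) * ∑ l, q l := by
  have h1 : ∀ l, ∑ m, (q l + q m) / 2 = ((n:ℝ) * q l + ∑ m, q m) / 2 := by
    intro l
    rw [← Finset.sum_div, Finset.sum_add_distrib, Finset.sum_const, Finset.card_univ,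
      Fintype.card_fin, nsmul_eq_mul]
  simp only [h1]
  rw [← Finset.sum_div, Finset.sum_add_distrib, ← Finset.mul_sum, Finset.sum_const,
    Finset.card_univ, Fintype.card_fin, nsmul_eq_mul]
  ring

lemma dotProduct_sum' {d n : ℕ} (x : Fin d → ℝ) (v : Fin n → Fin d → ℝ) :
    x ⬝ᵥ (∑ l, v l) = ∑ l, x ⬝ᵥ v l := by
  simp only [dotProduct, Finset.sum_apply, Finset.mul_sum]
  exact Finset.sum_comm (s := Finset.univ) (t := Finset.univ) (f := fun i l => x i * v l i)

lemma sum_dotProduct' {d n : ℕ} (x : Fin d → ℝ) (v : Fin n → Fin d → ℝ) :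
    (∑ l, v l) ⬝ᵥ x = ∑ l, v l ⬝ᵥ x := by
  simp only [dotProduct, Finset.sum_apply, Finset.sum_mul]
  exact Finset.sum_comm (s := Finset.univ) (t := Finset.univ) (f := fun i l => v l i * x i)

lemma mulVec_sum' {d n : ℕ} (B : Matrix (Fin d) (Fin d) ℝ) (v : Fin n → Fin d → ℝ) :
    B *ᵥ (∑ l, v l) = ∑ l, B *ᵥ v l := by
  ext i
  simp only [mulVec, dotProduct, Finset.sum_apply, Finset.mul_sum]
  exact Finset.sum_comm (s := Finset.univ) (t := Finset.univ) (f := fun j l => B i j * v l j)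

lemma diag_quad {d : ℕ} (B : Matrix (Fin d) (Fin d) ℝ) (i : Fin d) :
    (Pi.single i 1 : Fin d → ℝ) ⬝ᵥ (B *ᵥ Pi.single i 1) = B i i := by
  simp [dotProduct, mulVec, Pi.single_apply]

/-- Self-normalized bound on the summed features:
`(∑ φₗ)ᵀ Λ⁻¹ (∑ φₗ) ≤ n d` for `Λ = λI + ∑ φₗφₗᵀ`. -/
theorem stmt14 (d n : ℕ) (lam : ℝ) (hlam : 0 < lam)
    (φ : Fin n → Fin d → ℝ)
    (Λ : Matrix (Fin d) (Fin d) ℝ)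
    (hΛ : Λ = lam • (1 : Matrix (Fin d) (Fin d) ℝ) + ∑ l, vecMulVec (φ l) (φ l)) :
    (∑ l, φ l) ⬝ᵥ (Λ⁻¹ *ᵥ ∑ l, φ l) ≤ (n : ℝ) * d := by
  -- quadratic form of Λ
  have hquad : ∀ x : Fin d → ℝ,
      x ⬝ᵥ (Λ *ᵥ x) = lam * (x ⬝ᵥ x) + ∑ l, (φ l ⬝ᵥ x) ^ 2 := by
    intro x
    rw [hΛ, Matrix.add_mulVec, dotProduct_add, sum_mulVec', dotProduct_sum' ]
    congr 1
    · rw [Matrix.smul_mulVec, Matrix.one_mulVec, dotProduct_smul, smul_eq_mul]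
    · exact Finset.sum_congr rfl fun l _ => quad_vvT _ _
  have hΛpd : Λ.PosDef := by
    refine Matrix.posDef_iff_dotProduct_mulVec.mpr ⟨?_, ?_⟩
    · rw [hΛ]
      ext i j
      simp [Matrix.conjTranspose_apply, Matrix.add_apply, Matrix.smul_apply, Matrix.one_apply,
        Matrix.sum_apply, vecMulVec, eq_comm, mul_comm]
    · intro x hx
      simp only [star_trivial]
      rw [hquad]
      have hxx : 0 < x ⬝ᵥ x := by
        obtain ⟨i, hi⟩ := Function.ne_iff.mp hx
        have : (0:ℝ) < x i * x i := mul_self_pos.mpr (by simpa using hi)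
        exact Finset.sum_pos' (fun j _ => mul_self_nonneg _) ⟨i, Finset.mem_univ i, this⟩
      have h2 : (0:ℝ) ≤ ∑ l, (φ l ⬝ᵥ x) ^ 2 :=
        Finset.sum_nonneg fun l _ => sq_nonneg _
      positivity
  have hBpd : Λ⁻¹.PosDef := hΛpd.inv
  set B := Λ⁻¹ with hB
  have hq : ∀ x : Fin d → ℝ, 0 ≤ x ⬝ᵥ (B *ᵥ x) := fun x => by
    rcases eq_or_ne x 0 with h | h
    · simp [h]
    · exact le_of_lt (by simpa using hBpd.dotProduct_mulVec_pos h)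
  have hBt : Bᵀ = B := by
    ext i j
    rw [Matrix.transpose_apply]
    simpa using hBpd.isHermitian.apply i j
  have hsym : ∀ x y : Fin d → ℝ, x ⬝ᵥ (B *ᵥ y) = y ⬝ᵥ (B *ᵥ x) := fun x y => by
    rw [Matrix.dotProduct_mulVec, ← Matrix.mulVec_transpose, hBt, dotProduct_comm]
  have hcross : ∀ x y : Fin d → ℝ, x ⬝ᵥ (B *ᵥ y) ≤ (x ⬝ᵥ (B *ᵥ x) + y ⬝ᵥ (B *ᵥ y)) / 2 := by
    intro x y
    have h0 := hq (x - y)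
    have hexp : (x - y) ⬝ᵥ (B *ᵥ (x - y))
        = x ⬝ᵥ (B *ᵥ x) + y ⬝ᵥ (B *ᵥ y) - 2 * (x ⬝ᵥ (B *ᵥ y)) := by
      rw [Matrix.mulVec_sub, sub_dotProduct, dotProduct_sub,
        dotProduct_sub, hsym y x]
      ring
    rw [hexp] at h0
    linarith
  -- trace bound
  have htrB : 0 ≤ B.trace := by
    rw [Matrix.trace]
    refine Finset.sum_nonneg fun i _ => ?_
    have := hq (Pi.single i 1)
    rwa [diag_quad] at this
  have hmul : B * Λ = 1 := Matrix.nonsing_inv_mul Λ hΛpd.det_pos.ne'.isUnit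
  have htr : ∑ l, φ l ⬝ᵥ (B *ᵥ φ l) ≤ (d : ℝ) := by
    have hS : (∑ l, vecMulVec (φ l) (φ l)) = Λ - lam • 1 := by
      rw [hΛ]; abel
    have e1 : ∑ l, φ l ⬝ᵥ (B *ᵥ φ l) = (B * ∑ l, vecMulVec (φ l) (φ l)).trace := by
      rw [Finset.mul_sum, Matrix.trace_sum]
      exact (Finset.sum_congr rfl fun l _ => (trace_quad _).symm)
    rw [e1, hS, Matrix.mul_sub, hmul, Matrix.mul_smul, Matrix.mul_one, Matrix.trace_sub,
      Matrix.trace_smul, Matrix.trace_one]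
    simp only [Fintype.card_fin, smul_eq_mul]
    nlinarith
  -- expand and conclude
  have hexp : (∑ l, φ l) ⬝ᵥ (B *ᵥ ∑ l, φ l) = ∑ l, ∑ m, φ l ⬝ᵥ (B *ᵥ φ m) := by
    rw [mulVec_sum', dotProduct_sum']
    refine Finset.sum_congr rfl fun l _ => ?_
    rw [sum_dotProduct']
    exact Finset.sum_congr rfl fun m _ => hsym _ _
  calc (∑ l, φ l) ⬝ᵥ (B *ᵥ ∑ l, φ l)
      = ∑ l, ∑ m, φ l ⬝ᵥ (B *ᵥ φ m) := hexp
    _ ≤ ∑ l, ∑ m, (φ l ⬝ᵥ (B *ᵥ φ l) + φ m ⬝ᵥ (B *ᵥ φ m)) / 2 :=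
        Finset.sum_le_sum fun l _ => Finset.sum_le_sum fun m _ => hcross _ _
    _ = (n : ℝ) * ∑ l, φ l ⬝ᵥ (B *ᵥ φ l) := double_sum_avg _
    _ ≤ (n : ℝ) * d := mul_le_mul_of_nonneg_left htr (Nat.cast_nonneg n)
end
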